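/- Let λ, ζ ∈ ℂ, t ∈ ℝ, and R ∈ SO(n−1). Let h ∈ G be the matrix with h₀₀ = h₁₁ = cosh t, h₀₁ = h₁₀ = sinh t, lower-right (n−1)×(n−1) block equal to R, and all other entries 0. Define Θ(s) = |𝟏⁺ − s|^{−ρ−λ+ζ} · |𝟏⁻ − s|^{−ρ−λ−ζ} for s ∈ S, s ≠ ±𝟏⁺, where 𝟏⁺ = (1,0,…,0) and 𝟏⁻ = (−1,0,…,0). Then for every s ∈ S with s ≠ ±𝟏⁺: κ(h^{-1}, s)^{ρ+λ} · Θ(h^{-1}(s)) = e^{tζ} · Θ(s). (That is, π_λ(h) Θ_{λ,ζ} = ν_ζ(h) Θ_{λ,ζ} for all h in the stabilizer H of the pair (𝟏⁺, 𝟏⁻).) -/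

import Mathlib

/-!
For unit vectors `x, y` the Lorentz form of the lifts is half the chordal distance,
`[x̃, ỹ] = ‖x - y‖² / 2`, and `g x̃ = (g x̃)₀ · (g x)~`. Since `g` preserves `[·,·]`, this gives
`‖g x - g y‖² = κ(g,x) κ(g,y) ‖x - y‖²`. The element `h⁻¹` fixes the poles `𝟏^±` with
`κ(h⁻¹, 𝟏^±) = e^{±t}`, so the two distances in `Θ(h⁻¹ s)` are those of `Θ(s)` rescaled by
`e^{±t} κ(h⁻¹, s)`. The resulting powers of `κ(h⁻¹, s)` cancel against `κ(h⁻¹, s)^{ρ+λ}`,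
and the powers of `e^{±t}` leave `e^{tζ}`.
-/

open MeasureTheory Matrix

noncomputable section

/-- The Lorentzian bilinear form `[x,y] = x₀y₀ − Σ_{i=1}^n x_i y_i` on `ℝ^{n+1}`. -/
def lform (n : ℕ) (x y : Fin (n+1) → ℝ) : ℝ :=
  x 0 * y 0 - ∑ i : Fin n, x i.succ * y i.succ

/-- For `x ∈ S ⊂ ℝⁿ`, `x̃ = (1, x₁, …, x_n) ∈ ℝ^{n+1}`. -/
def tilde (n : ℕ) (x : EuclideanSpace ℝ (Fin n)) : Fin (n+1) → ℝ :=
  Fin.cons 1 (fun i => x i)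

/-- Membership in `G = SO₀(1,n)`. -/
def IsLorentz (n : ℕ) (g : Matrix (Fin (n+1)) (Fin (n+1)) ℝ) : Prop :=
  (∀ x y : Fin (n+1) → ℝ, lform n (g.mulVec x) (g.mulVec y) = lform n x y)
    ∧ g.det = 1 ∧ 0 < g 0 0

/-- The conformal action of `G` on the sphere: `g(x)ᵢ = (g x̃)ᵢ / (g x̃)₀`. -/
def sphAct (n : ℕ) (g : Matrix (Fin (n+1)) (Fin (n+1)) ℝ)
    (x : EuclideanSpace ℝ (Fin n)) : EuclideanSpace ℝ (Fin n) :=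
  WithLp.toLp 2 (fun i : Fin n => g.mulVec (tilde n x) i.succ / g.mulVec (tilde n x) 0)

/-- The conformal factor `κ(g,x) = (g x̃)₀⁻¹`. -/
def kappa (n : ℕ) (g : Matrix (Fin (n+1)) (Fin (n+1)) ℝ)
    (x : EuclideanSpace ℝ (Fin n)) : ℝ :=
  (g.mulVec (tilde n x) 0)⁻¹

/-- The point 𝟏⁺ = (1,0,…,0) ∈ S ⊂ ℝ^{m+1}. -/
def onePlus (m : ℕ) : EuclideanSpace ℝ (Fin (m+1)) := EuclideanSpace.single 0 1

/-- The point 𝟏⁻ = (−1,0,…,0) ∈ S ⊂ ℝ^{m+1}. -/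
def oneMinus (m : ℕ) : EuclideanSpace ℝ (Fin (m+1)) := EuclideanSpace.single 0 (-1)

/-- The element h ∈ G with h₀₀ = h₁₁ = cosh t, h₀₁ = h₁₀ = sinh t, lower-right
(n−1)×(n−1) block R and zeros elsewhere (here m = n − 1, so h is (m+2)×(m+2)). -/
def hMat (m : ℕ) (t : ℝ) (R : Matrix (Fin m) (Fin m) ℝ) :
    Matrix (Fin (m+1+1)) (Fin (m+1+1)) ℝ :=
  Matrix.reindex (finSumFinEquiv.trans (finCongr (by omega)))
    (finSumFinEquiv.trans (finCongr (by omega)))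
    (Matrix.fromBlocks !![Real.cosh t, Real.sinh t; Real.sinh t, Real.cosh t] 0 0 R)


open scoped InnerProductSpace

section SphereAction

variable {n : ℕ}

@[simp] lemma tilde_zero (x : EuclideanSpace ℝ (Fin n)) : tilde n x 0 = 1 := rfl

@[simp] lemma tilde_succ (x : EuclideanSpace ℝ (Fin n)) (i : Fin n) : tilde n x i.succ = x i := rfl

lemma lform_tilde_tilde (x y : EuclideanSpace ℝ (Fin n)) :
    lform n (tilde n x) (tilde n y) = 1 - ⟪x, y⟫_ℝ := by
  simp [lform, tilde, PiLp.inner_apply, mul_comm]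

lemma lform_smul_smul (a b : ℝ) (v w : Fin (n+1) → ℝ) :
    lform n (a • v) (b • w) = a * b * lform n v w := by
  simp only [lform, Pi.smul_apply, smul_eq_mul, mul_sub, Finset.mul_sum]
  congr 1 <;> [ring; exact Finset.sum_congr rfl fun _ _ => by ring]

lemma mulVec_tilde_eq_smul_tilde_sphAct (g : Matrix (Fin (n+1)) (Fin (n+1)) ℝ)
    (x : EuclideanSpace ℝ (Fin n)) (hgx : (g *ᵥ tilde n x) 0 ≠ 0) :
    g *ᵥ tilde n x = (g *ᵥ tilde n x) 0 • tilde n (sphAct n g x) := by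
  funext i
  induction i using Fin.cases with
  | zero => simp
  | succ i => simp [sphAct, mul_div_cancel₀ _ hgx]

lemma sphAct_of_mulVec_tilde_eq_smul {g : Matrix (Fin (n+1)) (Fin (n+1)) ℝ}
    {x : EuclideanSpace ℝ (Fin n)} {a : ℝ} (ha : a ≠ 0) (h : g *ᵥ tilde n x = a • tilde n x) :
    sphAct n g x = x ∧ kappa n g x = a⁻¹ := by
  have h0 : (g *ᵥ tilde n x) 0 = a := by rw [h]; simp
  refine ⟨?_, by rw [kappa, h0]⟩
  ext i
  simp [sphAct, h, ha]

variable {g : Matrix (Fin (n+1)) (Fin (n+1)) ℝ}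
  (hg : ∀ v w : Fin (n+1) → ℝ, lform n (g *ᵥ v) (g *ᵥ w) = lform n v w)
include hg

lemma norm_sphAct {x : EuclideanSpace ℝ (Fin n)} (hx : ‖x‖ = 1) (hgx : (g *ᵥ tilde n x) 0 ≠ 0) :
    ‖sphAct n g x‖ = 1 := by
  have h := hg (tilde n x) (tilde n x)
  rw [mulVec_tilde_eq_smul_tilde_sphAct g x hgx, lform_smul_smul, lform_tilde_tilde,
    lform_tilde_tilde, real_inner_self_eq_norm_sq, real_inner_self_eq_norm_sq, hx] at h
  have h1 : 1 - ‖sphAct n g x‖ ^ 2 = 0 :=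
    (mul_eq_zero.1 (by linear_combination h)).resolve_left (pow_ne_zero 2 hgx)
  exact (pow_eq_one_iff_of_nonneg (norm_nonneg _) two_ne_zero).1 (by linarith)

lemma norm_sphAct_sub_sphAct_sq {x y : EuclideanSpace ℝ (Fin n)} (hx : ‖x‖ = 1) (hy : ‖y‖ = 1)
    (hgx : (g *ᵥ tilde n x) 0 ≠ 0) (hgy : (g *ᵥ tilde n y) 0 ≠ 0) :
    ‖sphAct n g x - sphAct n g y‖ ^ 2 = kappa n g x * kappa n g y * ‖x - y‖ ^ 2 := by
  have h := hg (tilde n x) (tilde n y)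
  rw [mulVec_tilde_eq_smul_tilde_sphAct g x hgx, mulVec_tilde_eq_smul_tilde_sphAct g y hgy,
    lform_smul_smul, lform_tilde_tilde, lform_tilde_tilde] at h
  rw [norm_sub_sq_real, norm_sub_sq_real, norm_sphAct hg hx hgx, norm_sphAct hg hy hgy, hx, hy,
    kappa, kappa]
  field_simp
  linear_combination 2 * h

end SphereAction

lemma Matrix.reindex_mulVec_apply {α β R : Type*} [Fintype α] [Fintype β]
    [NonUnitalNonAssocSemiring R] (e : α ≃ β) (M : Matrix α α R) (v : β → R) (i : α) :
    (reindex e e M *ᵥ v) (e i) = (M *ᵥ (v ∘ e)) i := by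
  simp [reindex_apply, submatrix_mulVec_equiv]

lemma Matrix.mulVec_dotProduct_mulVec_of_transpose_mul_self {ι R : Type*} [Fintype ι]
    [DecidableEq ι] [CommRing R] {M : Matrix ι ι R} (hM : Mᵀ * M = 1) (v w : ι → R) :
    (M *ᵥ v) ⬝ᵥ (M *ᵥ w) = v ⬝ᵥ w := by
  rw [dotProduct_mulVec, ← mulVec_transpose, mulVec_mulVec, hM, one_mulVec]

lemma cosh_add_sinh_mul_pos (t : ℝ) {c : ℝ} (hc : |c| ≤ 1) :
    0 < Real.cosh t + Real.sinh t * c := by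
  have hsinh : |Real.sinh t| < Real.cosh t :=
    abs_lt_of_sq_lt_sq (by nlinarith [Real.cosh_sq_sub_sinh_sq t]) (Real.cosh_pos t).le
  have : |Real.sinh t * c| ≤ |Real.sinh t| := by
    rw [abs_mul]; exact mul_le_of_le_one_right (abs_nonneg _) hc
  linarith [neg_abs_le (Real.sinh t * c)]

section Boost

variable {m : ℕ}

lemma tilde_one (x : EuclideanSpace ℝ (Fin (m+1))) : tilde (m+1) x 1 = x 0 := rfl

lemma lform_eq_sub_sub_dotProduct (v w : Fin (m+1+1) → ℝ) :
    lform (m+1) v w =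
      v 0 * w 0 - v 1 * w 1 - (fun j : Fin m => v j.succ.succ) ⬝ᵥ fun j => w j.succ.succ := by
  simp [lform, Fin.sum_univ_succ, dotProduct]
  ring

def boostIndexEquiv (m : ℕ) : Fin 2 ⊕ Fin m ≃ Fin (m+1+1) :=
  finSumFinEquiv.trans (finCongr (by omega))

@[simp] lemma boostIndexEquiv_inl_zero : boostIndexEquiv m (Sum.inl 0) = 0 := rfl

@[simp] lemma boostIndexEquiv_inl_one : boostIndexEquiv m (Sum.inl 1) = 1 := rfl

@[simp] lemma boostIndexEquiv_inr (j : Fin m) : boostIndexEquiv m (Sum.inr j) = j.succ.succ :=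
  Fin.ext (by simp [boostIndexEquiv])

variable (t : ℝ) (R : Matrix (Fin m) (Fin m) ℝ)

lemma hMat_eq_reindex : hMat m t R = Matrix.reindex (boostIndexEquiv m) (boostIndexEquiv m)
    (Matrix.fromBlocks !![Real.cosh t, Real.sinh t; Real.sinh t, Real.cosh t] 0 0 R) := rfl

section MulVec

variable (v : Fin (m+1+1) → ℝ)

lemma hMat_mulVec_apply (i : Fin 2 ⊕ Fin m) :
    (hMat m t R *ᵥ v) (boostIndexEquiv m i) =
      (Matrix.fromBlocks !![Real.cosh t, Real.sinh t; Real.sinh t, Real.cosh t] 0 0 R *ᵥ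
        (v ∘ boostIndexEquiv m)) i :=
  Matrix.reindex_mulVec_apply _ _ _ _

lemma hMat_mulVec_zero : (hMat m t R *ᵥ v) 0 = Real.cosh t * v 0 + Real.sinh t * v 1 := by
  simpa [Matrix.fromBlocks_mulVec, Matrix.vecHead, Matrix.vecTail] using
    hMat_mulVec_apply t R v (Sum.inl 0)

lemma hMat_mulVec_one : (hMat m t R *ᵥ v) 1 = Real.sinh t * v 0 + Real.cosh t * v 1 := by
  simpa [Matrix.fromBlocks_mulVec, Matrix.vecHead, Matrix.vecTail] using
    hMat_mulVec_apply t R v (Sum.inl 1)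

lemma hMat_mulVec_succ_succ (j : Fin m) :
    (hMat m t R *ᵥ v) j.succ.succ = (R *ᵥ fun k => v k.succ.succ) j := by
  simpa [Matrix.fromBlocks_mulVec, Function.comp_def] using hMat_mulVec_apply t R v (Sum.inr j)

end MulVec

lemma lform_hMat_mulVec {R : Matrix (Fin m) (Fin m) ℝ} (hR : Rᵀ * R = 1)
    (v w : Fin (m+1+1) → ℝ) :
    lform (m+1) (hMat m t R *ᵥ v) (hMat m t R *ᵥ w) = lform (m+1) v w := by
  simp only [lform_eq_sub_sub_dotProduct, hMat_mulVec_zero, hMat_mulVec_one,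
    hMat_mulVec_succ_succ, Matrix.mulVec_dotProduct_mulVec_of_transpose_mul_self hR]
  linear_combination (v 0 * w 0 - v 1 * w 1) * Real.cosh_sq_sub_sinh_sq t

lemma hMat_inv {R : Matrix (Fin m) (Fin m) ℝ} (hR : R * Rᵀ = 1) :
    (hMat m t R)⁻¹ = hMat m (-t) Rᵀ := by
  have hboost : !![Real.cosh t, Real.sinh t; Real.sinh t, Real.cosh t] *
      !![Real.cosh (-t), Real.sinh (-t); Real.sinh (-t), Real.cosh (-t)] = 1 := by
    ext i j
    fin_cases i <;> fin_cases j <;> simp [Matrix.mul_apply] <;>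
      first | ring1 | linear_combination Real.cosh_sq_sub_sinh_sq t
  apply Matrix.inv_eq_right_inv
  rw [hMat_eq_reindex, hMat_eq_reindex, Matrix.reindex_apply, Matrix.reindex_apply,
    Matrix.submatrix_mul_equiv, Matrix.fromBlocks_multiply, hboost, hR]
  simp

lemma hMat_mulVec_tilde_zero (x : EuclideanSpace ℝ (Fin (m+1))) :
    (hMat m t R *ᵥ tilde (m+1) x) 0 = Real.cosh t + Real.sinh t * x 0 := by
  rw [hMat_mulVec_zero, tilde_zero, tilde_one, mul_one]

lemma hMat_mulVec_tilde_single {c : ℝ} (hc : c ^ 2 = 1) :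
    hMat m t R *ᵥ tilde (m+1) (EuclideanSpace.single 0 c) =
      (Real.cosh t + Real.sinh t * c) • tilde (m+1) (EuclideanSpace.single 0 c) := by
  funext i
  induction i using Fin.cases with
  | zero => simp [hMat_mulVec_zero, tilde_one]
  | succ i =>
    induction i using Fin.cases with
    | zero =>
      simp only [Fin.succ_zero_eq_one, hMat_mulVec_one, tilde_one, tilde_zero, Pi.smul_apply,
        PiLp.single_apply, if_true, smul_eq_mul]
      linear_combination -Real.sinh t * hc
    | succ j => simp [hMat_mulVec_succ_succ, ← Pi.zero_def]

lemma norm_single_sub_sphAct_hMat_sq {R : Matrix (Fin m) (Fin m) ℝ} (hR : Rᵀ * R = 1) {c : ℝ}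
    (hc : c ^ 2 = 1) {x : EuclideanSpace ℝ (Fin (m+1))} (hx : ‖x‖ = 1) :
    ‖EuclideanSpace.single 0 c - sphAct (m+1) (hMat m t R) x‖ ^ 2 =
      (Real.cosh t + Real.sinh t * c)⁻¹ * kappa (m+1) (hMat m t R) x *
        ‖EuclideanSpace.single 0 c - x‖ ^ 2 := by
  have hc' : |c| = 1 := (pow_eq_one_iff_of_nonneg (abs_nonneg c) two_ne_zero).1 (by rwa [sq_abs])
  have hpole := (cosh_add_sinh_mul_pos t hc'.le).ne'
  have hx0 : |x 0| ≤ 1 := by simpa [hx] using PiLp.norm_apply_le x 0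
  obtain ⟨hfix, hkappa⟩ := sphAct_of_mulVec_tilde_eq_smul hpole (hMat_mulVec_tilde_single t R hc)
  have h := norm_sphAct_sub_sphAct_sq (x := EuclideanSpace.single 0 c) (lform_hMat_mulVec t hR)
    (by simp [hc']) hx
    (by rw [hMat_mulVec_tilde_single t R hc]; simpa using hpole)
    (by rw [hMat_mulVec_tilde_zero]; exact (cosh_add_sinh_mul_pos t hx0).ne')
  rwa [hfix, hkappa] at h

end Boost

lemma ofReal_cpow_eq_of_sq_eq_mul_sq {x y c : ℝ} (hx : 0 ≤ x) (hy : 0 ≤ y) (hc : 0 < c)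
    (h : x ^ 2 = c * y ^ 2) (w : ℂ) : (x : ℂ) ^ w = (c : ℂ) ^ (w / 2) * (y : ℂ) ^ w := by
  have hxy : x = √c * y := by
    rw [← Real.sqrt_sq hx, h, Real.sqrt_mul hc.le, Real.sqrt_sq hy]
  have hsqrt : ((√c : ℝ) : ℂ) ^ w = (c : ℂ) ^ (w / 2) := by
    rw [Complex.cpow_def_of_ne_zero (by exact_mod_cast (Real.sqrt_pos.2 hc).ne'),
      Complex.cpow_def_of_ne_zero (by exact_mod_cast hc.ne'),
      ← Complex.ofReal_log (Real.sqrt_nonneg _), ← Complex.ofReal_log hc.le, Real.log_sqrt hc.le]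
    push_cast
    ring_nf
  rw [hxy, Complex.ofReal_mul, Complex.mul_cpow_ofReal_nonneg (Real.sqrt_nonneg _) hy, hsqrt]

lemma cpow_mul_exp_mul_cpow_mul_exp_neg {k : ℝ} (hk : 0 < k) (t : ℝ) (a b : ℂ) :
    (k : ℂ) ^ (-(a + b) / 2) * ((Real.exp t * k : ℝ) : ℂ) ^ (a / 2) *
      ((Real.exp (-t) * k : ℝ) : ℂ) ^ (b / 2) = Complex.exp (t * ((a - b) / 2)) := by
  have hpos : ∀ u : ℝ, 0 < Real.exp u * k := fun u => mul_pos (Real.exp_pos u) hk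
  rw [Complex.cpow_def_of_ne_zero (by exact_mod_cast hk.ne'),
    Complex.cpow_def_of_ne_zero (by exact_mod_cast (hpos t).ne'),
    Complex.cpow_def_of_ne_zero (by exact_mod_cast (hpos (-t)).ne'),
    ← Complex.ofReal_log hk.le, ← Complex.ofReal_log (hpos t).le,
    ← Complex.ofReal_log (hpos (-t)).le, Real.log_mul (Real.exp_pos t).ne' hk.ne',
    Real.log_mul (Real.exp_pos (-t)).ne' hk.ne', Real.log_exp, Real.log_exp,
    ← Complex.exp_add, ← Complex.exp_add]
  congr 1
  push_cast
  ring

theorem statement16_general (m : ℕ) (lam zeta : ℂ) (t : ℝ)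
    (R : Matrix (Fin m) (Fin m) ℝ)
    (hR : R ∈ Matrix.orthogonalGroup (Fin m) ℝ)
    (s : EuclideanSpace ℝ (Fin (m+1))) (hs : ‖s‖ = 1) :
    (kappa (m+1) (hMat m t R)⁻¹ s : ℂ) ^ ((m : ℂ) / 2 + lam) *
        ((‖onePlus m - sphAct (m+1) (hMat m t R)⁻¹ s‖ : ℂ) ^ (-((m : ℂ) / 2) - lam + zeta) *
          (‖oneMinus m - sphAct (m+1) (hMat m t R)⁻¹ s‖ : ℂ) ^ (-((m : ℂ) / 2) - lam - zeta))
      = Complex.exp ((t : ℂ) * zeta) *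
          ((‖onePlus m - s‖ : ℂ) ^ (-((m : ℂ) / 2) - lam + zeta) *
            (‖oneMinus m - s‖ : ℂ) ^ (-((m : ℂ) / 2) - lam - zeta)) := by
  have hRRt : R * Rᵀ = 1 := (Matrix.mem_orthogonalGroup_iff _ _).1 hR
  have hRt : Rᵀᵀ * Rᵀ = 1 := by rwa [Matrix.transpose_transpose]
  rw [hMat_inv t hRRt]
  have hk : 0 < kappa (m+1) (hMat m (-t) Rᵀ) s := by
    have hs0 : |s 0| ≤ 1 := by simpa [hs] using PiLp.norm_apply_le s 0
    exact inv_pos.2 (by rw [hMat_mulVec_tilde_zero]; exact cosh_add_sinh_mul_pos _ hs0)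
  have hplus := norm_single_sub_sphAct_hMat_sq (-t) hRt (one_pow 2) hs
  have hminus := norm_single_sub_sphAct_hMat_sq (-t) hRt (by norm_num : (-1 : ℝ) ^ 2 = 1) hs
  rw [← onePlus, Real.cosh_neg, Real.sinh_neg, mul_one, ← sub_eq_add_neg, Real.cosh_sub_sinh,
    ← Real.exp_neg, neg_neg] at hplus
  rw [← oneMinus, Real.cosh_neg, Real.sinh_neg, neg_mul_neg, mul_one, Real.cosh_add_sinh,
    ← Real.exp_neg] at hminus
  rw [ofReal_cpow_eq_of_sq_eq_mul_sq (norm_nonneg _) (norm_nonneg _) (by positivity) hplus,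
    ofReal_cpow_eq_of_sq_eq_mul_sq (norm_nonneg _) (norm_nonneg _) (by positivity) hminus]
  have hμ : (m : ℂ) / 2 + lam =
      -((-((m : ℂ) / 2) - lam + zeta) + (-((m : ℂ) / 2) - lam - zeta)) / 2 := by ring
  have hζ : (t : ℂ) * zeta =
      t * (((-((m : ℂ) / 2) - lam + zeta) - (-((m : ℂ) / 2) - lam - zeta)) / 2) := by ring
  rw [hμ, hζ, ← cpow_mul_exp_mul_cpow_mul_exp_neg hk]
  ring

/-- the covariance π_λ(h) Θ_{λ,ζ} = ν_ζ(h) Θ_{λ,ζ} for h in the stabilizer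
H of (𝟏⁺, 𝟏⁻), where Θ_{λ,ζ}(s) = |𝟏⁺−s|^{−ρ−λ+ζ}|𝟏⁻−s|^{−ρ−λ−ζ} and ρ = (n−1)/2 = m/2. -/
theorem statement16 (m : ℕ) (hm : 1 ≤ m) (lam zeta : ℂ) (t : ℝ)
    (R : Matrix (Fin m) (Fin m) ℝ)
    (hR : R ∈ Matrix.orthogonalGroup (Fin m) ℝ) (hRdet : R.det = 1)
    (s : EuclideanSpace ℝ (Fin (m+1))) (hs : ‖s‖ = 1)
    (hs1 : s ≠ onePlus m) (hs2 : s ≠ oneMinus m) :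
    (kappa (m+1) (hMat m t R)⁻¹ s : ℂ) ^ ((m : ℂ) / 2 + lam) *
        ((‖onePlus m - sphAct (m+1) (hMat m t R)⁻¹ s‖ : ℂ) ^ (-((m : ℂ) / 2) - lam + zeta) *
          (‖oneMinus m - sphAct (m+1) (hMat m t R)⁻¹ s‖ : ℂ) ^ (-((m : ℂ) / 2) - lam - zeta))
      = Complex.exp ((t : ℂ) * zeta) *
          ((‖onePlus m - s‖ : ℂ) ^ (-((m : ℂ) / 2) - lam + zeta) *
            (‖oneMinus m - s‖ : ℂ) ^ (-((m : ℂ) / 2) - lam - zeta)) :=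
  statement16_general m lam zeta t R hR s hs
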